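/- Let ψ be the Lévy–Khintchine characteristic exponent associated with drift μ ∈ ℝ, volatility σ ≥ 0, and jump measure ν, and assume in addition that ∫_{|x|>1} |x|^ε ν(dx) < ∞ for some ε ∈ (0, 1). Then for every q ∈ (0, 1) the function h(ω) = (1 − q)/(1 − q·e^{ψ(ω)}) satisfies a global Hölder condition on ℝ: there exist a constant C > 0 and an exponent γ ∈ (0, 1] such that |h(ω₁) − h(ω₂)| ≤ C|ω₁ − ω₂|^γ for all ω₁, ω₂ ∈ ℝ. -/

import Mathlib

/-!
Since `‖exp ψ‖ ≤ 1`, the denominator `1 - q exp ψ` stays at distance at least `1 - q` from `0`,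
so `z ↦ (1 - q) / (1 - q z)` is Lipschitz on the closed unit disc and it suffices to show that
`φ = exp ∘ ψ` is `ε`-Hölder. If `Re ψ(ω₁) ≤ Re ψ(ω₂)`, then
`‖φ(ω₁) - φ(ω₂)‖ ≤ ‖ψ(ω₁) - ψ(ω₂)‖ e^{Re ψ(ω₂)}`. Comparing the Lévy integrands pointwise, the
jumps in `[-1, 1]` contribute at most `|ω₁ - ω₂| (1 - cos (ω₂ x)) + 3 |ω₁ - ω₂| x²` and the
larger ones at most `2 |ω₁ - ω₂|^ε |x|^ε`, so for `|ω₁ - ω₂| ≤ 1` the increment of `ψ` is at most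
`(|μ| + σ² - Re ψ(ω₂)) |ω₁ - ω₂| + O(|ω₁ - ω₂|^ε)`. The unbounded term `-Re ψ(ω₂)` is absorbed
by the factor `e^{Re ψ(ω₂)}`, because `t e^{-t} ≤ 1`.
-/

open MeasureTheory Complex Real

/-- The Lévy–Khintchine characteristic exponent with drift `μ`, volatility `σ`
and jump measure `ν`. -/
noncomputable def levyExponent (μdrift σ : ℝ) (ν : Measure ℝ) (ω : ℝ) : ℂ :=
  Complex.I * (μdrift : ℂ) * (ω : ℂ) - (1 / 2 : ℂ) * (σ : ℂ) ^ 2 * (ω : ℂ) ^ 2 +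
    ∫ x : ℝ, (Complex.exp (Complex.I * ω * x) - 1 -
      (Set.Icc (-1 : ℝ) 1).indicator (fun t : ℝ => Complex.I * (ω : ℂ) * (t : ℂ)) x) ∂ν

open Set

namespace Complex

theorem norm_exp_sub_one_le_of_re_nonpos {z : ℂ} (hz : z.re ≤ 0) : ‖exp z - 1‖ ≤ ‖z‖ := by
  have hderiv : ∀ t ∈ Icc (0 : ℝ) 1,
      HasDerivWithinAt (fun t : ℝ => exp (t * z)) (exp (t * z) * z) (Icc 0 1) t := fun t _ =>
    ((hasDerivAt_id (t : ℂ)).mul_const z |>.comp_ofReal.cexp |>.hasDerivWithinAt).congr_deriv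
      (by simp)
  have hbound : ∀ t ∈ Ico (0 : ℝ) 1, ‖exp (t * z) * z‖ ≤ ‖z‖ := fun t ht => by
    rw [norm_mul, norm_exp]
    refine mul_le_of_le_one_left (norm_nonneg z) (Real.exp_le_one_iff.2 ?_)
    simpa using mul_nonpos_of_nonneg_of_nonpos ht.1 hz
  simpa using norm_image_sub_le_of_norm_deriv_le_segment_01' hderiv hbound

theorem norm_exp_sub_exp_le_of_re_le {a b : ℂ} (h : a.re ≤ b.re) :
    ‖exp a - exp b‖ ≤ ‖a - b‖ * Real.exp b.re := by
  have hsplit : exp a - exp b = exp b * (exp (a - b) - 1) := by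
    rw [mul_sub, ← exp_add]; ring_nf
  rw [hsplit, norm_mul, norm_exp, mul_comm]
  gcongr
  exact norm_exp_sub_one_le_of_re_nonpos (by simpa using h)

theorem norm_exp_I_mul_ofReal_sub_one_le_two (θ : ℝ) : ‖exp (I * θ) - 1‖ ≤ 2 := by
  calc ‖exp (I * θ) - 1‖ ≤ ‖exp (I * θ)‖ + ‖(1 : ℂ)‖ := norm_sub_le _ _
    _ = 2 := by rw [norm_exp_I_mul_ofReal, norm_one]; norm_num

theorem norm_exp_I_mul_ofReal_sub_one_le_rpow (θ : ℝ) {ε : ℝ} (hε0 : 0 ≤ ε) (hε1 : ε ≤ 1) :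
    ‖exp (I * θ) - 1‖ ≤ 2 * |θ| ^ ε := by
  rcases le_total |θ| 1 with hθ | hθ
  · calc ‖exp (I * θ) - 1‖ ≤ |θ| := norm_exp_I_mul_ofReal_sub_one_le
      _ ≤ |θ| ^ ε := by simpa using Real.rpow_le_rpow_of_exponent_ge' (abs_nonneg θ) hθ hε0 hε1
      _ ≤ 2 * |θ| ^ ε := by linarith [Real.rpow_nonneg (abs_nonneg θ) ε]
  · calc ‖exp (I * θ) - 1‖ ≤ 2 := norm_exp_I_mul_ofReal_sub_one_le_two θ
      _ ≤ 2 * |θ| ^ ε := le_mul_of_one_le_right zero_le_two (Real.one_le_rpow hθ hε0)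

theorem sq_norm_exp_I_mul_ofReal_sub_one (θ : ℝ) :
    ‖exp (I * θ) - 1‖ ^ 2 = 2 * (1 - Real.cos θ) := by
  rw [norm_exp_I_mul_ofReal_sub_one, norm_mul, mul_pow, Real.norm_eq_abs, Real.norm_eq_abs,
    sq_abs, sq_abs, Real.sin_sq, Real.cos_sq, mul_div_cancel₀ _ two_ne_zero]
  norm_num
  ring

theorem norm_exp_I_mul_ofReal_sub_one_sub_le (θ : ℝ) :
    ‖exp (I * θ) - 1 - I * θ‖ ≤ 2 * θ ^ 2 := by
  rcases le_total |θ| 1 with hθ | hθ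
  · have hIθ : ‖I * (θ : ℂ)‖ = |θ| := by simp
    calc ‖exp (I * θ) - 1 - I * θ‖ ≤ ‖I * (θ : ℂ)‖ ^ 2 :=
          norm_exp_sub_one_sub_id_le (hIθ ▸ hθ)
      _ ≤ 2 * θ ^ 2 := by rw [hIθ, sq_abs]; nlinarith [sq_nonneg θ]
  · calc ‖exp (I * θ) - 1 - I * θ‖ ≤ ‖exp (I * θ) - 1‖ + ‖I * (θ : ℂ)‖ := norm_sub_le _ _
      _ ≤ |θ| + |θ| := by
          gcongr
          · exact norm_exp_I_mul_ofReal_sub_one_le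
          · simp
      _ ≤ 2 * θ ^ 2 := by nlinarith [sq_abs θ]

end Complex

noncomputable def levyIntegrand (ω x : ℝ) : ℂ :=
  Complex.exp (Complex.I * ω * x) - 1 -
    (Set.Icc (-1 : ℝ) 1).indicator (fun t : ℝ => Complex.I * (ω : ℂ) * (t : ℂ)) x

noncomputable def levyWeight (ε x : ℝ) : ℝ :=
  min 1 (x ^ 2) + {x : ℝ | 1 < |x|}.indicator (fun x => |x| ^ ε) x

section LevyIntegrand

variable {ω ω₁ ω₂ x ε : ℝ}

theorem levyIntegrand_of_abs_le_one (hx : |x| ≤ 1) :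
    levyIntegrand ω x = exp (I * (ω * x : ℝ)) - 1 - I * (ω * x : ℝ) := by
  rw [levyIntegrand, indicator_of_mem (show x ∈ Icc (-1 : ℝ) 1 from abs_le.1 hx)]
  push_cast
  ring_nf

theorem levyIntegrand_of_one_lt_abs (hx : 1 < |x|) :
    levyIntegrand ω x = exp (I * (ω * x : ℝ)) - 1 := by
  rw [levyIntegrand,
    indicator_of_notMem (show x ∉ Icc (-1 : ℝ) 1 from fun h => (abs_le.2 h).not_gt hx)]
  push_cast
  ring_nf

theorem levyIntegrand_re : (levyIntegrand ω x).re = Real.cos (ω * x) - 1 := by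
  rcases le_or_gt |x| 1 with hx | hx
  · simp [levyIntegrand_of_abs_le_one hx, exp_re]
  · simp [levyIntegrand_of_one_lt_abs hx, exp_re]

theorem norm_levyIntegrand_le : ‖levyIntegrand ω x‖ ≤ (2 + 2 * ω ^ 2) * min 1 (x ^ 2) := by
  rcases le_or_gt |x| 1 with hx | hx
  · have hx2 : x ^ 2 ≤ 1 := by nlinarith [sq_abs x, abs_nonneg x]
    rw [levyIntegrand_of_abs_le_one hx, min_eq_right hx2]
    calc _ ≤ 2 * (ω * x) ^ 2 := norm_exp_I_mul_ofReal_sub_one_sub_le _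
      _ ≤ (2 + 2 * ω ^ 2) * x ^ 2 := by nlinarith [sq_nonneg x]
  · have hx2 : 1 ≤ x ^ 2 := by nlinarith [sq_abs x]
    rw [levyIntegrand_of_one_lt_abs hx, min_eq_left hx2]
    calc _ ≤ 2 := norm_exp_I_mul_ofReal_sub_one_le_two _
      _ ≤ (2 + 2 * ω ^ 2) * 1 := by nlinarith [sq_nonneg ω]

theorem measurable_levyIntegrand (ω : ℝ) : Measurable (levyIntegrand ω) :=
  (by fun_prop : Measurable fun x : ℝ => exp (I * ω * x) - 1).sub
    (Measurable.indicator (by fun_prop) measurableSet_Icc)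

theorem norm_levyIntegrand_sub_le_of_abs_le_one (hx : |x| ≤ 1) (hδ : |ω₁ - ω₂| ≤ 1) :
    ‖levyIntegrand ω₁ x - levyIntegrand ω₂ x‖ ≤
      |ω₁ - ω₂| * (1 - Real.cos (ω₂ * x)) + 3 * |ω₁ - ω₂| * x ^ 2 := by
  set δ := ω₁ - ω₂
  set u := ‖exp (I * (ω₂ * x : ℝ)) - 1‖
  have hsplit : levyIntegrand ω₁ x - levyIntegrand ω₂ x =
      (exp (I * (ω₂ * x : ℝ)) - 1) * (exp (I * (δ * x : ℝ)) - 1) +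
        (exp (I * (δ * x : ℝ)) - 1 - I * (δ * x : ℝ)) := by
    rw [levyIntegrand_of_abs_le_one hx, levyIntegrand_of_abs_le_one hx,
      show ω₁ * x = ω₂ * x + δ * x by ring]
    push_cast
    rw [mul_add, Complex.exp_add]
    ring
  -- `u ^ 2 = 2 (1 - cos (ω₂ x))`, so AM-GM on `u * |x|` produces the term `1 - cos (ω₂ x)`.
  have hcross : u * ‖exp (I * (δ * x : ℝ)) - 1‖ ≤ |δ| * ((1 - Real.cos (ω₂ * x)) + x ^ 2 / 2) := by
    have hu := sq_norm_exp_I_mul_ofReal_sub_one (ω₂ * x)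
    calc u * ‖exp (I * (δ * x : ℝ)) - 1‖ ≤ u * (|δ| * |x|) := by
          gcongr
          simpa [abs_mul] using norm_exp_I_mul_ofReal_sub_one_le (x := δ * x)
      _ ≤ |δ| * ((1 - Real.cos (ω₂ * x)) + x ^ 2 / 2) := by
          nlinarith [sq_nonneg (u - |x|), sq_abs x, abs_nonneg δ]
  have htaylor : ‖exp (I * (δ * x : ℝ)) - 1 - I * (δ * x : ℝ)‖ ≤ 2 * |δ| * x ^ 2 := by
    have hδ2 : δ ^ 2 ≤ |δ| := by nlinarith [sq_abs δ, abs_nonneg δ]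
    exact (norm_exp_I_mul_ofReal_sub_one_sub_le _).trans
      (by nlinarith [mul_le_mul_of_nonneg_right hδ2 (sq_nonneg x)])
  calc ‖levyIntegrand ω₁ x - levyIntegrand ω₂ x‖
      ≤ u * ‖exp (I * (δ * x : ℝ)) - 1‖ + ‖exp (I * (δ * x : ℝ)) - 1 - I * (δ * x : ℝ)‖ := by
        rw [hsplit, ← norm_mul]
        exact norm_add_le _ _
    _ ≤ |δ| * (1 - Real.cos (ω₂ * x)) + 3 * |δ| * x ^ 2 := by
        nlinarith [abs_nonneg δ, sq_nonneg x]

theorem norm_levyIntegrand_sub_le_of_one_lt_abs (hx : 1 < |x|) (hε0 : 0 ≤ ε) (hε1 : ε ≤ 1) :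
    ‖levyIntegrand ω₁ x - levyIntegrand ω₂ x‖ ≤ 2 * |ω₁ - ω₂| ^ ε * |x| ^ ε := by
  have hsplit : levyIntegrand ω₁ x - levyIntegrand ω₂ x =
      exp (I * (ω₂ * x : ℝ)) * (exp (I * ((ω₁ - ω₂) * x : ℝ)) - 1) := by
    rw [levyIntegrand_of_one_lt_abs hx, levyIntegrand_of_one_lt_abs hx, mul_sub, ← Complex.exp_add]
    push_cast
    ring_nf
  rw [hsplit, norm_mul, norm_exp_I_mul_ofReal, one_mul, mul_assoc,
    ← Real.mul_rpow (abs_nonneg _) (abs_nonneg _), ← abs_mul]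
  exact norm_exp_I_mul_ofReal_sub_one_le_rpow _ hε0 hε1

theorem norm_levyIntegrand_sub_le (hδ : |ω₁ - ω₂| ≤ 1) (hε0 : 0 ≤ ε) (hε1 : ε ≤ 1) (x : ℝ) :
    ‖levyIntegrand ω₁ x - levyIntegrand ω₂ x‖ ≤
      |ω₁ - ω₂| * (1 - Real.cos (ω₂ * x)) + 3 * |ω₁ - ω₂| ^ ε * levyWeight ε x := by
  have hcos : 0 ≤ 1 - Real.cos (ω₂ * x) := sub_nonneg.2 (Real.cos_le_one _)
  have hδε : |ω₁ - ω₂| ≤ |ω₁ - ω₂| ^ ε := by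
    simpa using Real.rpow_le_rpow_of_exponent_ge' (abs_nonneg _) hδ hε0 hε1
  rcases le_or_gt |x| 1 with hx | hx
  · have hx2 : x ^ 2 ≤ 1 := by nlinarith [sq_abs x, abs_nonneg x]
    have hw : levyWeight ε x = x ^ 2 := by
      simp [levyWeight, min_eq_right hx2, hx.not_gt]
    rw [hw]
    refine (norm_levyIntegrand_sub_le_of_abs_le_one hx hδ).trans ?_
    gcongr
  · have hw : levyWeight ε x = 1 + |x| ^ ε := by
      simp [levyWeight, min_eq_left (by nlinarith [sq_abs x] : 1 ≤ x ^ 2), hx]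
    rw [hw]
    refine (norm_levyIntegrand_sub_le_of_one_lt_abs hx hε0 hε1).trans ?_
    nlinarith [Real.rpow_nonneg (abs_nonneg (ω₁ - ω₂)) ε, Real.rpow_nonneg (abs_nonneg x) ε,
      abs_nonneg (ω₁ - ω₂)]

end LevyIntegrand

theorem levyWeight_nonneg (ε x : ℝ) : 0 ≤ levyWeight ε x :=
  add_nonneg (le_min zero_le_one (sq_nonneg x)) (indicator_nonneg (fun _ _ => by positivity) _)

theorem norm_drift_sub_le (μdrift σ : ℝ) {ω₁ ω₂ : ℝ} (hδ : |ω₁ - ω₂| ≤ 1) :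
    ‖(I * μdrift * ω₁ - (1 / 2 : ℂ) * σ ^ 2 * ω₁ ^ 2) -
        (I * μdrift * ω₂ - (1 / 2 : ℂ) * σ ^ 2 * ω₂ ^ 2)‖ ≤
      (|μdrift| + σ ^ 2 + σ ^ 2 * ω₂ ^ 2 / 2) * |ω₁ - ω₂| := by
  have hfactor : (I * μdrift * ω₁ - (1 / 2 : ℂ) * σ ^ 2 * ω₁ ^ 2) -
        (I * μdrift * ω₂ - (1 / 2 : ℂ) * σ ^ 2 * ω₂ ^ 2) =
      ((ω₁ - ω₂ : ℝ) : ℂ) * (I * μdrift - ((σ ^ 2 / 2 * (ω₁ + ω₂) : ℝ) : ℂ)) := by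
    push_cast
    ring
  have hsum : |ω₁ + ω₂| ≤ 2 * |ω₂| + 1 := by
    calc |ω₁ + ω₂| = |(ω₁ - ω₂) + 2 * ω₂| := by ring_nf
      _ ≤ |ω₁ - ω₂| + |2 * ω₂| := abs_add_le _ _
      _ ≤ 2 * |ω₂| + 1 := by rw [abs_mul, abs_two]; linarith
  have hω₂ : 2 * |ω₂| ≤ 1 + ω₂ ^ 2 := by nlinarith [sq_abs ω₂, sq_nonneg (|ω₂| - 1)]
  rw [hfactor, norm_mul, norm_real, Real.norm_eq_abs, mul_comm]
  gcongr
  calc ‖I * μdrift - ((σ ^ 2 / 2 * (ω₁ + ω₂) : ℝ) : ℂ)‖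
      ≤ ‖I * (μdrift : ℂ)‖ + ‖((σ ^ 2 / 2 * (ω₁ + ω₂) : ℝ) : ℂ)‖ := norm_sub_le _ _
    _ = |μdrift| + σ ^ 2 / 2 * |ω₁ + ω₂| := by
        rw [norm_mul, norm_I, one_mul, norm_real, norm_real, Real.norm_eq_abs, Real.norm_eq_abs,
          abs_mul, abs_of_nonneg (by positivity : (0 : ℝ) ≤ σ ^ 2 / 2)]
    _ ≤ |μdrift| + σ ^ 2 + σ ^ 2 * ω₂ ^ 2 / 2 := by nlinarith [sq_nonneg σ]

theorem levyExponent_eq (μdrift σ : ℝ) (ν : Measure ℝ) (ω : ℝ) :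
    levyExponent μdrift σ ν ω =
      I * μdrift * ω - (1 / 2 : ℂ) * σ ^ 2 * ω ^ 2 + ∫ x, levyIntegrand ω x ∂ν :=
  rfl

theorem levyExponent_re (μdrift σ : ℝ) (ν : Measure ℝ) (ω : ℝ) :
    (levyExponent μdrift σ ν ω).re = -(σ ^ 2 * ω ^ 2 / 2) + (∫ x, levyIntegrand ω x ∂ν).re := by
  rw [levyExponent_eq, add_re]
  simp [← ofReal_pow]
  ring

section LevyExponent

variable {ν : Measure ℝ} {ε : ℝ}

theorem integrable_levyIntegrand (hν : Integrable (fun x : ℝ => min 1 (x ^ 2)) ν) (ω : ℝ) :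
    Integrable (levyIntegrand ω) ν :=
  (hν.const_mul _).mono' (measurable_levyIntegrand ω).aestronglyMeasurable
    (ae_of_all _ fun _ => norm_levyIntegrand_le)

theorem integrable_levyWeight (hν : Integrable (fun x : ℝ => min 1 (x ^ 2)) ν)
    (hνε : IntegrableOn (fun x : ℝ => |x| ^ ε) {x : ℝ | 1 < |x|} ν) :
    Integrable (levyWeight ε) ν :=
  hν.add (hνε.integrable_indicator (measurableSet_lt measurable_const measurable_abs))

theorem re_integral_levyIntegrand (hν : Integrable (fun x : ℝ => min 1 (x ^ 2)) ν) (ω : ℝ) :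
    (∫ x, levyIntegrand ω x ∂ν).re = -∫ x, (1 - Real.cos (ω * x)) ∂ν := by
  have h := integral_re (integrable_levyIntegrand hν ω)
  simp only [RCLike.re_to_complex, levyIntegrand_re] at h
  rw [← h, ← integral_neg]
  simp only [neg_sub]

theorem norm_integral_levyIntegrand_sub_le (hν : Integrable (fun x : ℝ => min 1 (x ^ 2)) ν)
    (hw : Integrable (levyWeight ε) ν) {ω₁ ω₂ : ℝ} (hδ : |ω₁ - ω₂| ≤ 1) (hε0 : 0 ≤ ε)
    (hε1 : ε ≤ 1) :
    ‖∫ x, levyIntegrand ω₁ x ∂ν - ∫ x, levyIntegrand ω₂ x ∂ν‖ ≤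
      -|ω₁ - ω₂| * (∫ x, levyIntegrand ω₂ x ∂ν).re +
        3 * |ω₁ - ω₂| ^ ε * ∫ x, levyWeight ε x ∂ν := by
  have hcos : Integrable (fun x => 1 - Real.cos (ω₂ * x)) ν := by
    refine (integrable_levyIntegrand hν ω₂).re.neg.congr (ae_of_all _ fun x => ?_)
    simp [levyIntegrand_re]
  rw [← integral_sub (integrable_levyIntegrand hν ω₁) (integrable_levyIntegrand hν ω₂),
    re_integral_levyIntegrand hν, neg_mul_neg, ← integral_const_mul, ← integral_const_mul,
    ← integral_add (hcos.const_mul _) (hw.const_mul _)]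
  exact norm_integral_le_of_norm_le ((hcos.const_mul _).add (hw.const_mul _))
    (ae_of_all _ (norm_levyIntegrand_sub_le hδ hε0 hε1))

theorem levyExponent_re_nonpos (μdrift σ : ℝ) (hν : Integrable (fun x : ℝ => min 1 (x ^ 2)) ν)
    (ω : ℝ) : (levyExponent μdrift σ ν ω).re ≤ 0 := by
  rw [levyExponent_re, re_integral_levyIntegrand hν]
  have : 0 ≤ ∫ x, (1 - Real.cos (ω * x)) ∂ν :=
    integral_nonneg fun x => sub_nonneg.2 (Real.cos_le_one _)
  nlinarith [sq_nonneg σ, sq_nonneg ω]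

theorem norm_exp_levyExponent_le_one (μdrift σ : ℝ)
    (hν : Integrable (fun x : ℝ => min 1 (x ^ 2)) ν) (ω : ℝ) :
    ‖exp (levyExponent μdrift σ ν ω)‖ ≤ 1 := by
  rw [norm_exp, Real.exp_le_one_iff]
  exact levyExponent_re_nonpos μdrift σ hν ω

theorem norm_levyExponent_sub_le (μdrift σ : ℝ) (hν : Integrable (fun x : ℝ => min 1 (x ^ 2)) ν)
    (hw : Integrable (levyWeight ε) ν) {ω₁ ω₂ : ℝ} (hδ : |ω₁ - ω₂| ≤ 1) (hε0 : 0 ≤ ε)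
    (hε1 : ε ≤ 1) :
    ‖levyExponent μdrift σ ν ω₁ - levyExponent μdrift σ ν ω₂‖ ≤
      (|μdrift| + σ ^ 2 - (levyExponent μdrift σ ν ω₂).re) * |ω₁ - ω₂| +
        3 * (∫ x, levyWeight ε x ∂ν) * |ω₁ - ω₂| ^ ε := by
  have hsplit : levyExponent μdrift σ ν ω₁ - levyExponent μdrift σ ν ω₂ =
      ((I * μdrift * ω₁ - (1 / 2 : ℂ) * σ ^ 2 * ω₁ ^ 2) -
        (I * μdrift * ω₂ - (1 / 2 : ℂ) * σ ^ 2 * ω₂ ^ 2)) +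
      (∫ x, levyIntegrand ω₁ x ∂ν - ∫ x, levyIntegrand ω₂ x ∂ν) := by
    rw [levyExponent_eq, levyExponent_eq]
    ring
  rw [hsplit, levyExponent_re]
  calc _ ≤ _ := norm_add_le _ _
    _ ≤ _ := add_le_add (norm_drift_sub_le μdrift σ hδ)
        (norm_integral_levyIntegrand_sub_le hν hw hδ hε0 hε1)
    _ = _ := by ring

theorem norm_exp_levyExponent_sub_le (μdrift σ : ℝ)
    (hν : Integrable (fun x : ℝ => min 1 (x ^ 2)) ν) (hw : Integrable (levyWeight ε) ν)
    (hε0 : 0 ≤ ε) (hε1 : ε ≤ 1) (ω₁ ω₂ : ℝ) :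
    ‖exp (levyExponent μdrift σ ν ω₁) - exp (levyExponent μdrift σ ν ω₂)‖ ≤
      (|μdrift| + σ ^ 2 + 3 * (∫ x, levyWeight ε x ∂ν) + 3) * |ω₁ - ω₂| ^ ε := by
  wlog hre : (levyExponent μdrift σ ν ω₁).re ≤ (levyExponent μdrift σ ν ω₂).re
    generalizing ω₁ ω₂
  · rw [norm_sub_rev, abs_sub_comm]
    exact this ω₂ ω₁ (le_of_not_ge hre)
  set M := ∫ x, levyWeight ε x ∂ν
  have hM : 0 ≤ M := integral_nonneg (levyWeight_nonneg ε)
  rcases le_or_gt |ω₁ - ω₂| 1 with hδ | hδ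
  · set r := (levyExponent μdrift σ ν ω₂).re
    have hexp : Real.exp r ≤ 1 := Real.exp_le_one_iff.2 (levyExponent_re_nonpos μdrift σ hν ω₂)
    -- The factor `-r` in the increment of the exponent is absorbed by the decay `exp r`.
    have hrexp : -r * Real.exp r ≤ 1 := by
      simpa using (Real.mul_exp_neg_le_exp_neg_one (-r)).trans
        (Real.exp_le_one_iff.2 (by norm_num))
    have hδε : |ω₁ - ω₂| ≤ |ω₁ - ω₂| ^ ε := by
      simpa using Real.rpow_le_rpow_of_exponent_ge' (abs_nonneg _) hδ hε0 hε1
    calc _ ≤ ‖levyExponent μdrift σ ν ω₁ - levyExponent μdrift σ ν ω₂‖ * Real.exp r :=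
          norm_exp_sub_exp_le_of_re_le hre
      _ ≤ ((|μdrift| + σ ^ 2 - r) * |ω₁ - ω₂| + 3 * M * |ω₁ - ω₂| ^ ε) * Real.exp r := by
          gcongr
          exact norm_levyExponent_sub_le μdrift σ hν hw hδ hε0 hε1
      _ = (|μdrift| + σ ^ 2) * |ω₁ - ω₂| * Real.exp r + -r * Real.exp r * |ω₁ - ω₂| +
            3 * M * |ω₁ - ω₂| ^ ε * Real.exp r := by ring
      _ ≤ (|μdrift| + σ ^ 2) * |ω₁ - ω₂| + |ω₁ - ω₂| + 3 * M * |ω₁ - ω₂| ^ ε := by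
          have h1 :=
            mul_le_of_le_one_right (by positivity : 0 ≤ (|μdrift| + σ ^ 2) * |ω₁ - ω₂|) hexp
          have h2 := mul_le_of_le_one_left (abs_nonneg (ω₁ - ω₂)) hrexp
          have h3 := mul_le_of_le_one_right (by positivity : 0 ≤ 3 * M * |ω₁ - ω₂| ^ ε) hexp
          linarith
      _ ≤ _ := by
          nlinarith [mul_le_mul_of_nonneg_left hδε (by positivity : 0 ≤ |μdrift| + σ ^ 2),
            Real.rpow_nonneg (abs_nonneg (ω₁ - ω₂)) ε]
  · have hone : 1 ≤ |ω₁ - ω₂| ^ ε := Real.one_le_rpow hδ.le hε0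
    calc _ ≤ ‖exp (levyExponent μdrift σ ν ω₁)‖ + ‖exp (levyExponent μdrift σ ν ω₂)‖ :=
          norm_sub_le _ _
      _ ≤ 2 := by linarith [norm_exp_levyExponent_le_one μdrift σ hν ω₁,
          norm_exp_levyExponent_le_one μdrift σ hν ω₂]
      _ ≤ _ := by nlinarith [abs_nonneg μdrift, sq_nonneg σ]

end LevyExponent

theorem norm_inv_one_sub_mul_sub_inv_one_sub_mul_le {a b c : ℂ} (ha : ‖a‖ ≤ 1) (hb : ‖b‖ ≤ 1)
    (hc : ‖c‖ < 1) :
    ‖(1 - c * a)⁻¹ - (1 - c * b)⁻¹‖ ≤ ‖c‖ / (1 - ‖c‖) ^ 2 * ‖a - b‖ := by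
  have hlow : ∀ z : ℂ, ‖z‖ ≤ 1 → 1 - ‖c‖ ≤ ‖1 - c * z‖ := fun z hz => by
    have := norm_sub_norm_le (1 : ℂ) (c * z)
    rw [norm_one, norm_mul] at this
    nlinarith [norm_nonneg c]
  have ha' := hlow a ha
  have hb' := hlow b hb
  have hpos : 0 < 1 - ‖c‖ := sub_pos.2 hc
  rw [inv_sub_inv (norm_pos_iff.1 (hpos.trans_le ha')) (norm_pos_iff.1 (hpos.trans_le hb')),
    show 1 - c * b - (1 - c * a) = c * (a - b) by ring, norm_div, norm_mul, norm_mul,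
    div_mul_eq_mul_div, mul_comm ‖c‖, sq]
  gcongr

theorem levyExponent_geometric_char_fn_holder_general
    (μdrift σ : ℝ) (ν : Measure ℝ)
    (hν : ∫⁻ x : ℝ, ENNReal.ofReal (min 1 (x ^ 2)) ∂ν < ⊤)
    (hνε : ∃ ε ∈ Set.Ioo (0 : ℝ) 1,
      ∫⁻ x : ℝ in {x : ℝ | 1 < |x|}, ENNReal.ofReal (|x| ^ ε) ∂ν < ⊤)
    (q : ℝ) (hq : q ∈ Set.Ioo (0 : ℝ) 1) :
    ∃ C > (0 : ℝ), ∃ γ ∈ Set.Ioc (0 : ℝ) 1, ∀ ω₁ ω₂ : ℝ,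
      ‖((1 : ℂ) - q) / (1 - (q : ℂ) * Complex.exp (levyExponent μdrift σ ν ω₁)) -
        ((1 : ℂ) - q) / (1 - (q : ℂ) * Complex.exp (levyExponent μdrift σ ν ω₂))‖ ≤
        C * |ω₁ - ω₂| ^ γ := by
  obtain ⟨ε, ⟨hε0, hε1⟩, hνε⟩ := hνε
  obtain ⟨hq0, hq1⟩ := hq
  have hν' : Integrable (fun x : ℝ => min 1 (x ^ 2)) ν :=
    ⟨by fun_prop, (hasFiniteIntegral_iff_ofReal (ae_of_all _ fun x => by positivity)).2 hν⟩
  have hνε' : IntegrableOn (fun x : ℝ => |x| ^ ε) {x : ℝ | 1 < |x|} ν :=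
    ⟨(continuous_abs.rpow_const fun _ => Or.inr hε0.le).aestronglyMeasurable,
      (hasFiniteIntegral_iff_ofReal (ae_of_all _ fun x => by positivity)).2 hνε⟩
  set Cφ := |μdrift| + σ ^ 2 + 3 * (∫ x, levyWeight ε x ∂ν) + 3
  have hCφ : 0 < Cφ := by
    have : 0 ≤ ∫ x, levyWeight ε x ∂ν := integral_nonneg (levyWeight_nonneg ε)
    positivity
  have hq1' : 0 < 1 - q := sub_pos.2 hq1
  have hqn : ‖(q : ℂ)‖ = q := by simp [hq0.le]
  have h1q : ‖(1 : ℂ) - q‖ = 1 - q := by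
    rw [← ofReal_one, ← ofReal_sub, norm_real, Real.norm_eq_abs, abs_of_pos hq1']
  refine ⟨(1 - q) * (q / (1 - q) ^ 2) * Cφ, by positivity, ε, ⟨hε0, hε1.le⟩, fun ω₁ ω₂ => ?_⟩
  rw [div_eq_mul_inv, div_eq_mul_inv, ← mul_sub, norm_mul, h1q, mul_assoc, mul_assoc]
  gcongr
  have hlip := norm_inv_one_sub_mul_sub_inv_one_sub_mul_le
    (norm_exp_levyExponent_le_one μdrift σ hν' ω₁) (norm_exp_levyExponent_le_one μdrift σ hν' ω₂)
    (hqn.symm ▸ hq1)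
  rw [hqn] at hlip
  refine hlip.trans ?_
  gcongr
  exact norm_exp_levyExponent_sub_le μdrift σ hν' (integrable_levyWeight hν' hνε') hε0.le hε1.le
    ω₁ ω₂

/-- If moreover `∫_{|x|>1} |x|^ε ν(dx) < ∞` for some `ε ∈ (0, 1)`, then for
every `q ∈ (0, 1)` the function `h(ω) = (1 − q)/(1 − q e^{ψ(ω)})` satisfies a
global Hölder condition on `ℝ`. -/
theorem levyExponent_geometric_char_fn_holder
    (μdrift σ : ℝ) (hσ : 0 ≤ σ) (ν : Measure ℝ)
    (hν0 : ν {0} = 0)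
    (hν : ∫⁻ x : ℝ, ENNReal.ofReal (min 1 (x ^ 2)) ∂ν < ⊤)
    (hνε : ∃ ε ∈ Set.Ioo (0 : ℝ) 1,
      ∫⁻ x : ℝ in {x : ℝ | 1 < |x|}, ENNReal.ofReal (|x| ^ ε) ∂ν < ⊤)
    (q : ℝ) (hq : q ∈ Set.Ioo (0 : ℝ) 1) :
    ∃ C > (0 : ℝ), ∃ γ ∈ Set.Ioc (0 : ℝ) 1, ∀ ω₁ ω₂ : ℝ,
      ‖((1 : ℂ) - q) / (1 - (q : ℂ) * Complex.exp (levyExponent μdrift σ ν ω₁)) -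
        ((1 : ℂ) - q) / (1 - (q : ℂ) * Complex.exp (levyExponent μdrift σ ν ω₂))‖ ≤
        C * |ω₁ - ω₂| ^ γ :=
  levyExponent_geometric_char_fn_holder_general μdrift σ ν hν hνε q hq
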